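/- Let α = [0;2,\overline{r}] with r ≥ 1, and let k, m ∈ ℕ be such that k = q_{m+1} − p with 2 ≤ p ≤ q_{m+1} − q_m + 1. Then (σ^m)_k(c_α) = u⁻¹ v_{m−1} ∏_{j=m}^{∞} v_j, where u is the prefix of v_{m−1} of length |u| = q_{m+1} − q_m + 1 − p. -/

import Mathlib

/-- The two-letter alphabet 𝒜 = {a, b}. -/
inductive AB : Type
  | a : AB
  | b : AB
deriving DecidableEq, Repr

/-- Apply a morphism (determined by its images on the letters) to a finite word. -/
def applyM (g : AB → List AB) (w : List AB) : List AB := w.flatMap g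

/-- The exchange morphism E : a ↦ b, b ↦ a. -/
def Em : AB → List AB
  | AB.a => [AB.b]
  | AB.b => [AB.a]

/-- The morphism φ : a ↦ ab, b ↦ a. -/
def phim : AB → List AB
  | AB.a => [AB.a, AB.b]
  | AB.b => [AB.a]

/-- Composition of morphisms: `compM g h` applies `h` first, then `g`. -/
def compM (g h : AB → List AB) : AB → List AB := fun c => applyM g (h c)

/-- Powers of a morphism. -/
def mpow (g : AB → List AB) : ℕ → AB → List AB
  | 0 => fun c => [c]
  | n + 1 => compM g (mpow g n)

/-- A morphism is standard iff it is a composition of E and φ (in any number and order). -/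
inductive IsStandard : (AB → List AB) → Prop
  | id : IsStandard (fun c => [c])
  | compE {ψ : AB → List AB} : IsStandard ψ → IsStandard (compM ψ Em)
  | compPhi {ψ : AB → List AB} : IsStandard ψ → IsStandard (compM ψ phim)

/-- `IsRightConj ψ ξ k` : ξ is the k-th right conjugate of ψ, i.e. there is a word u
of length k with ψ(w)u = uξ(w) for all finite words w. -/
def IsRightConj (ψ ξ : AB → List AB) (k : ℕ) : Prop :=
  ∃ u : List AB, u.length = k ∧ ∀ w : List AB, applyM ψ w ++ u = u ++ applyM ξ w

/-- w^k (power of a finite word under concatenation). -/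
def lpow (w : List AB) : ℕ → List AB
  | 0 => []
  | k + 1 => w ++ lpow w k

/-- Standard sequence associated with a directive sequence (d₁, d₂, …) (here `d`
is indexed so that `d i` is dᵢ for i ≥ 1): `sseq d 0 = s₋₁ = b`, `sseq d (n+1) = sₙ`,
with s₀ = a and sₙ = sₙ₋₁^{dₙ} sₙ₋₂. -/
def sseq (d : ℕ → ℕ) : ℕ → List AB
  | 0 => [AB.b]
  | 1 => [AB.a]
  | n + 2 => lpow (sseq d (n + 1)) (d (n + 1)) ++ sseq d n

/-- Convergent denominators: `qseq d n` = qₙ = |sₙ| (q₀ = 1, q₁ = 1 + d₁,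
qₙ = dₙqₙ₋₁ + qₙ₋₂). -/
def qseq (d : ℕ → ℕ) : ℕ → ℕ
  | 0 => 1
  | 1 => 1 + d 1
  | n + 2 => d (n + 2) * qseq d (n + 1) + qseq d n

/-- `PrefInf u x` : the finite word u is a prefix of the infinite word x. -/
def PrefInf (u : List AB) (x : ℕ → AB) : Prop :=
  ∀ i, i < u.length → u.getD i AB.a = x i

/-- Image of an infinite word under a (non-erasing) morphism, letter by letter. -/
def applyInf (g : AB → List AB) (x : ℕ → AB) : ℕ → AB :=
  fun i => (applyM g ((List.range (i + 1)).map x)).getD i AB.a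

/-- `IsProdInf u x` : the infinite word x is the infinite product u 0 · u 1 · u 2 ⋯,
i.e. every finite partial product is a prefix of x. -/
def IsProdInf (u : ℕ → List AB) (x : ℕ → AB) : Prop :=
  ∀ n, PrefInf (((List.range n).map u).flatten) x

/-- Adjoining singular words: `vword d k` is the adjoining singular word v_{k-1}
(so `vword d 0 = v₋₁`), where vₙ = a·sₙ₊₁^{d_{n+2}−1}sₙ·b⁻¹ for n odd and
vₙ = b·sₙ₊₁^{d_{n+2}−1}sₙ·a⁻¹ for n even. -/
def vword (d : ℕ → ℕ) (k : ℕ) : List AB :=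
  (if k % 2 = 0 then AB.a else AB.b) ::
    (lpow (sseq d (k + 1)) (d (k + 1) - 1) ++ sseq d k).dropLast

/-- Singular words: `wword d k` is the singular word w_{k-2}
(w₋₂ = ε, w₋₁ = a, w₀ = b, and wₙ = a·sₙ·b⁻¹ for n ≥ 1 odd, wₙ = b·sₙ·a⁻¹ for n even). -/
def wword (d : ℕ → ℕ) : ℕ → List AB
  | 0 => []
  | 1 => [AB.a]
  | 2 => [AB.b]
  | k + 3 =>
      (if (k + 1) % 2 = 1 then AB.a else AB.b) :: (sseq d (k + 2)).dropLast

/-- The standard morphism σ associated with a type (i) Sturm number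
α = [0;1+d₁,\overline{d₂,…,dₙ}] : σ(a) = sₙ₋₁, σ(b) = sₙ₋₁^{dₙ−d₁} sₙ₋₂. -/
def sigmaGen (d : ℕ → ℕ) (n : ℕ) : AB → List AB
  | AB.a => sseq d n
  | AB.b => lpow (sseq d n) (d n - d 1) ++ sseq d (n - 1)

/-- The directive sequence of α = [0;2,\overline{r}] : d₁ = 1, dᵢ = r for i ≥ 2. -/
def dseq (r : ℕ) : ℕ → ℕ := fun i => if i ≤ 1 then 1 else r

/-- The directive sequence of 1 − α = [0;1,d₁,\overline{d₂,…,dₙ}] obtained from that of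
α = [0;1+d₁,\overline{d₂,…,dₙ}] : ê₁ = 0 and êᵢ = dᵢ₋₁ for i ≥ 2. -/
def dhat (d : ℕ → ℕ) : ℕ → ℕ := fun i => if i ≤ 1 then 0 else d (i - 1)

/-- `Generates ψ c x` : ψ is prolongable on the letter c and x = ψ^ω(c), i.e. every
ψ^m(c) is a prefix of x. -/
def Generates (ψ : AB → List AB) (c : AB) (x : ℕ → AB) : Prop :=
  (∃ w : List AB, w ≠ [] ∧ ψ c = c :: w) ∧ ∀ m, PrefInf (mpow ψ m c) x

/-- Fibonacci numbers, shifted: `fibw k = F_{k-1}`, so fibw 0 = F₋₁ = 1,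
fibw 1 = F₀ = 1, Fₙ = Fₙ₋₁ + Fₙ₋₂. -/
def fibw : ℕ → ℕ
  | 0 => 1
  | 1 => 1
  | n + 2 => fibw (n + 1) + fibw n

/-- `HasCF γ a` : γ has continued fraction expansion [0; a 1, a 2, a 3, …]. -/
def HasCF (γ : ℝ) (a : ℕ → ℕ) : Prop :=
  ∃ x : ℕ → ℝ, x 0 = γ ∧ (∀ i, 0 < x i ∧ x i < 1) ∧
    ∀ i, 1 / x i = (a (i + 1) : ℝ) + x (i + 1)

/-- γ has a continued fraction expansion of type (i):
γ = [0;1+d₁,\overline{d₂,…,dₙ}] < 1/2 with dₙ ≥ d₁ ≥ 1. -/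
def CFTypeI (γ : ℝ) : Prop :=
  ∃ a : ℕ → ℕ, HasCF γ a ∧ γ < 1 / 2 ∧
    ∃ n : ℕ, 2 ≤ n ∧ ∃ d : ℕ → ℕ,
      (∀ i, 1 ≤ i → 1 ≤ d i) ∧ a 1 = 1 + d 1 ∧ (∀ i, 2 ≤ i → a i = d i) ∧
      (∀ i, 2 ≤ i → d (i + (n - 1)) = d i) ∧ d 1 ≤ d n

/-- γ has a continued fraction expansion of type (ii):
γ = [0;1,d₁,\overline{d₂,…,dₙ}] > 1/2 with dₙ ≥ d₁. -/
def CFTypeII (γ : ℝ) : Prop :=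
  ∃ a : ℕ → ℕ, HasCF γ a ∧ 1 / 2 < γ ∧
    ∃ n : ℕ, 2 ≤ n ∧ ∃ d : ℕ → ℕ,
      (∀ i, 1 ≤ i → 1 ≤ d i) ∧ a 1 = 1 ∧ (∀ i, 2 ≤ i → a i = d (i - 1)) ∧
      (∀ i, 2 ≤ i → d (i + (n - 1)) = d i) ∧ d 1 ≤ d n

/-- A Sturm number: an irrational γ ∈ (0,1) whose continued fraction expansion is of
type (i) or type (ii). -/
def IsSturmNumber (γ : ℝ) : Prop :=
  Irrational γ ∧ 0 < γ ∧ γ < 1 ∧ (CFTypeI γ ∨ CFTypeII γ)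

/-! Since `σ(s_n) = s_{n+1}`, the word `c_α` is a fixed point of `σ^m`, and comparing
`σ^m(w) u = u ξ(w)` on a long prefix `w` of `c_α` shows that `ξ(c_α)` is `c_α` with its first
`k = |u|` letters deleted. On the other hand, removing the last letter of `s_n` leaves
`v₋₁ v₀ ⋯ v_{n−2}`: in `s_{n+1} = s_n · s_n^{d−1} s_{n−1}`, the word `v_{n−1}` is the second
factor with its last letter removed and the last letter of `s_n` prepended. Since `s_m`
without its last letter, followed by the first `q_{m+1} − q_m + 1 − p` letters of `v_{m−1}`, has
length `k`, deleting them leaves `u⁻¹ v_{m−1} v_m v_{m+1} ⋯`. -/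

lemma length_lpow (w : List AB) (k : ℕ) : (lpow w k).length = k * w.length := by
  induction k with
  | zero => simp [lpow]
  | succ k ih => simp only [lpow, List.length_append, ih]; ring

lemma lpow_add (w : List AB) (i j : ℕ) : lpow w (i + j) = lpow w i ++ lpow w j := by
  induction i with
  | zero => simp [lpow]
  | succ i ih => simp [Nat.succ_add, lpow, ih]

section Morphisms

variable (g : AB → List AB)

lemma applyM_append (u v : List AB) : applyM g (u ++ v) = applyM g u ++ applyM g v :=
  List.flatMap_append ..

lemma applyM_lpow (w : List AB) (k : ℕ) : applyM g (lpow w k) = lpow (applyM g w) k := by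
  induction k with
  | zero => rfl
  | succ k ih => rw [lpow, applyM_append, ih, lpow]

lemma applyM_compM (h : AB → List AB) (w : List AB) :
    applyM (compM g h) w = applyM g (applyM h w) := by
  simp only [applyM, List.flatMap_assoc]
  rfl

lemma List.IsPrefix.applyM {u w : List AB} (h : u <+: w) : applyM g u <+: applyM g w :=
  h.flatMap g

variable {g}

lemma length_le_length_applyM (hg : ∀ c, g c ≠ []) (w : List AB) :
    w.length ≤ (applyM g w).length := by
  induction w with
  | nil => rfl
  | cons c w ih =>
    have : 0 < (g c).length := List.length_pos_iff.mpr (hg c)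
    simp only [applyM, List.flatMap_cons, List.length_append, List.length_cons] at ih ⊢
    omega

lemma mpow_ne_nil (hg : ∀ c, g c ≠ []) (n : ℕ) (c : AB) : mpow g n c ≠ [] := by
  induction n with
  | zero => simp [mpow]
  | succ n ih =>
    rw [← List.length_pos_iff] at ih ⊢
    exact ih.trans_le (length_le_length_applyM hg _)

end Morphisms

section InfiniteWords

variable {x : ℕ → AB} {u w : List AB}

lemma PrefInf.of_prefix (h : u <+: w) (hw : PrefInf w x) : PrefInf u x := by
  intro i hi
  rw [← hw i (hi.trans_le h.length_le), List.getD_eq_getElem _ _ hi,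
    List.getD_eq_getElem _ _ (hi.trans_le h.length_le), h.getElem hi]

lemma PrefInf.drop (hw : PrefInf w x) (k : ℕ) : PrefInf (w.drop k) (fun i => x (k + i)) := by
  intro i hi
  rw [List.length_drop] at hi
  beta_reduce
  rw [← hw (k + i) (by omega), List.getD_eq_getElem _ _ (by simp; omega),
    List.getD_eq_getElem _ _ (by omega), List.getElem_drop]

lemma range_map_prefix_of_prefInf (hw : PrefInf w x) {n : ℕ} (hn : n ≤ w.length) :
    (List.range n).map x <+: w := by
  refine List.prefix_iff_eq_take.mpr (List.ext_getElem (by simp [hn]) fun i hi _ => ?_)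
  simp only [List.length_map, List.length_range] at hi
  have := hw i (by omega)
  rw [List.getD_eq_getElem _ _ (by omega)] at this
  simp [this]

theorem applyInf_eq_of_isRightConj {ψ ξ : AB → List AB} {k : ℕ} (hξ : IsRightConj ψ ξ k)
    (hψ : ∀ c, ψ c ≠ []) (hx : ∀ n, PrefInf (applyM ψ ((List.range n).map x)) x) (i : ℕ) :
    applyInf ξ x i = x (k + i) := by
  obtain ⟨u, rfl, hconj⟩ := hξ
  set W := (List.range (u.length + i + 1)).map x
  have hWψ : u.length + i < (applyM ψ W).length :=
    Nat.lt_of_lt_of_le (by simp [W]) (length_le_length_applyM hψ W)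
  have hlen : ∀ w, (applyM ξ w).length = (applyM ψ w).length := fun w => by
    have := congrArg List.length (hconj w)
    simp only [List.length_append] at this
    omega
  have hpre : (List.range (i + 1)).map x <+: W :=
    range_map_prefix_of_prefInf (fun j hj => by simp_all [W]) (by simp [W])
  have hi : i < (applyM ξ ((List.range (i + 1)).map x)).length := by
    rw [hlen]; exact Nat.lt_of_lt_of_le (by simp) (length_le_length_applyM hψ _)
  calc applyInf ξ x i
      = (applyM ξ W).getD i AB.a := by
        rw [applyInf, List.getD_eq_getElem _ _ hi,
          List.getD_eq_getElem _ _ (hi.trans_le (hpre.applyM ξ).length_le),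
          (hpre.applyM ξ).getElem hi]
    _ = (u ++ applyM ξ W).getD (u.length + i) AB.a := by
        rw [List.getD_append_right _ _ _ _ (by omega), Nat.add_sub_cancel_left]
    _ = (applyM ψ W).getD (u.length + i) AB.a := by
        rw [← hconj, List.getD_append _ _ _ _ hWψ]
    _ = x (u.length + i) := hx _ _ hWψ

end InfiniteWords

section StandardSequence

variable {d : ℕ → ℕ}

lemma sseq_ne_nil : ∀ n, sseq d n ≠ []
  | 0 | 1 => List.cons_ne_nil _ _
  | n + 2 => fun h => sseq_ne_nil n (List.append_eq_nil_iff.mp h).2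

lemma length_sseq : ∀ n, (sseq d (n + 1)).length = qseq d n
  | 0 => rfl
  | 1 => by simp [sseq, qseq, length_lpow, add_comm]
  | n + 2 => by
    rw [sseq, List.length_append, length_lpow, length_sseq (n + 1), length_sseq n, qseq]

lemma le_length_sseq (hd : ∀ i, 0 < d (i + 1)) : ∀ n, n ≤ (sseq d n).length
  | 0 | 1 => by simp [sseq]
  | n + 2 => by
    have h₁ := le_length_sseq hd (n + 1)
    have h₂ := List.length_pos_iff.mpr (sseq_ne_nil (d := d) n)
    rw [sseq, List.length_append, length_lpow]
    nlinarith [hd n]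

lemma getLast?_sseq : ∀ n, (sseq d (n + 1)).getLast? = some (if n % 2 = 0 then AB.a else AB.b)
  | 0 => rfl
  | 1 => by rw [sseq, List.getLast?_append_of_ne_nil _ (sseq_ne_nil 0)]; rfl
  | n + 2 => by
    rw [sseq, List.getLast?_append_of_ne_nil _ (sseq_ne_nil _), getLast?_sseq n]
    simp [Nat.add_mod_right]

lemma dropLast_sseq_append (n : ℕ) :
    (sseq d (n + 1)).dropLast ++ [if n % 2 = 0 then AB.a else AB.b] = sseq d (n + 1) := by
  have h := getLast?_sseq (d := d) n
  rw [List.getLast?_eq_some_getLast (sseq_ne_nil _), Option.some_inj] at h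
  rw [← h, List.dropLast_concat_getLast]

lemma dropLast_sseq_succ {n : ℕ} (hd : 0 < d (n + 1)) :
    (sseq d (n + 2)).dropLast = (sseq d (n + 1)).dropLast ++ vword d n := by
  have hsplit : sseq d (n + 2) = sseq d (n + 1) ++
      (lpow (sseq d (n + 1)) (d (n + 1) - 1) ++ sseq d n) := by
    have hd' : d (n + 1) = 1 + (d (n + 1) - 1) := by omega
    conv_lhs => rw [sseq, hd', lpow_add]
    simp [lpow]
  rw [hsplit, List.dropLast_append_of_ne_nil (by simp [sseq_ne_nil]), vword,
    ← List.singleton_append, ← List.append_assoc, dropLast_sseq_append]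

lemma length_vword_add {n : ℕ} (hd : 0 < d (n + 1)) :
    (vword d n).length + qseq d n = qseq d (n + 1) := by
  have h := congrArg List.length (dropLast_sseq_succ hd)
  have hpos := List.length_pos_iff.mpr (sseq_ne_nil (d := d) (n + 1))
  have hpos' := List.length_pos_iff.mpr (sseq_ne_nil (d := d) (n + 2))
  simp only [List.length_append, List.length_dropLast, length_sseq] at h hpos hpos'
  omega

lemma dropLast_sseq_eq (hd : ∀ i, 0 < d (i + 1)) (m : ℕ) :
    ∀ n, (sseq d (m + n + 2)).dropLast = (sseq d (m + 1)).dropLast ++ vword d m ++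
      ((List.range n).map fun j => vword d (m + j + 1)).flatten
  | 0 => by simp [dropLast_sseq_succ (hd m)]
  | n + 1 => by
    rw [← add_assoc, dropLast_sseq_succ (hd _), dropLast_sseq_eq hd m n, List.range_succ]
    simp [add_assoc]

lemma flatten_map_drop_vword (hpos : ∀ i, 0 < d (i + 1)) {m ℓ : ℕ}
    (hℓ : ℓ ≤ (vword d m).length) (n : ℕ) :
    ((List.range (n + 1)).map
        fun t => if t = 0 then (vword d m).drop ℓ else vword d (m + t)).flatten =
      ((sseq d (m + n + 2)).dropLast).drop ((sseq d (m + 1)).dropLast.length + ℓ) := by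
  rw [dropLast_sseq_eq hpos, List.append_assoc, List.drop_length_add_append,
    List.drop_append_of_le_length hℓ, List.range_succ_eq_map]
  simp [Function.comp_def, add_assoc]

end StandardSequence

section Sigma

variable {d : ℕ → ℕ}

lemma sigmaGen_two_ne_nil : ∀ c, sigmaGen d 2 c ≠ []
  | AB.a => sseq_ne_nil 2
  | AB.b => fun h => sseq_ne_nil 1 (List.append_eq_nil_iff.mp h).2

lemma applyM_sigmaGen_two_sseq (hd₁₂ : d 1 ≤ d 2) (hd : ∀ n, 2 ≤ n → d n = d 2) :
    ∀ n, applyM (sigmaGen d 2) (sseq d (n + 1)) = sseq d (n + 2)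
  | 0 => List.append_nil _
  | 1 => by
    have hσ₁ : applyM (sigmaGen d 2) (sseq d 2) =
        lpow (sseq d 2) (d 1) ++ (lpow (sseq d 2) (d 2 - d 1) ++ sseq d 1) := by
      conv_lhs => rw [show sseq d 2 = lpow [AB.a] (d 1) ++ [AB.b] from rfl, applyM_append,
        applyM_lpow]
      simp only [applyM, List.flatMap_singleton]
      rfl
    rw [hσ₁, ← List.append_assoc, ← lpow_add, Nat.add_sub_cancel' hd₁₂]
    rfl
  | n + 2 => by
    rw [sseq, applyM_append, applyM_lpow, applyM_sigmaGen_two_sseq hd₁₂ hd (n + 1),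
      applyM_sigmaGen_two_sseq hd₁₂ hd n]
    show _ = lpow (sseq d (n + 3)) (d (n + 3)) ++ sseq d (n + 2)
    rw [hd (n + 2) (by omega), hd (n + 3) (by omega)]

lemma applyM_mpow_sigmaGen_two_sseq (hd₁₂ : d 1 ≤ d 2) (hd : ∀ n, 2 ≤ n → d n = d 2)
    (m n : ℕ) : applyM (mpow (sigmaGen d 2) m) (sseq d (n + 1)) = sseq d (n + m + 1) := by
  induction m with
  | zero => simp [mpow, applyM]
  | succ m ih =>
    rw [mpow, applyM_compM, ih, applyM_sigmaGen_two_sseq hd₁₂ hd]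
    rfl

lemma prefInf_applyM_mpow_sigmaGen_two (hpos : ∀ i, 0 < d (i + 1)) (hd₁₂ : d 1 ≤ d 2)
    (hd : ∀ n, 2 ≤ n → d n = d 2) {c : ℕ → AB} (hc : ∀ k, PrefInf (sseq d (k + 1)) c)
    (m n : ℕ) : PrefInf (applyM (mpow (sigmaGen d 2) m) ((List.range n).map c)) c := by
  have hpre :=
    range_map_prefix_of_prefInf (hc n) ((le_length_sseq hpos (n + 1)).trans' n.le_succ)
  refine PrefInf.of_prefix (hpre.applyM _) ?_
  rw [applyM_mpow_sigmaGen_two_sseq hd₁₂ hd]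
  exact hc _

end Sigma

/-- For α = [0;2,\overline{r}] (r ≥ 1): if k = q_{m+1} − p with
2 ≤ p ≤ q_{m+1} − q_m + 1, then (σ^m)_k(c_α) = u⁻¹ v_{m−1} ∏_{j=m}^∞ v_j, where
u is the prefix of v_{m−1} of length q_{m+1} − q_m + 1 − p
(so u⁻¹v_{m−1} is v_{m−1} with its first q_{m+1} − q_m + 1 − p letters removed). -/
theorem statement2 (r : ℕ) (hr : 1 ≤ r)
    (c : ℕ → AB) (hc : ∀ k, PrefInf (sseq (dseq r) (k + 1)) c)
    (k m p : ℕ) (hp2 : 2 ≤ p)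
    (hp : p ≤ qseq (dseq r) (m + 1) - qseq (dseq r) m + 1)
    (hk : k = qseq (dseq r) (m + 1) - p)
    (ξ : AB → List AB) (hξ : IsRightConj (mpow (sigmaGen (dseq r) 2) m) ξ k) :
    IsProdInf
      (fun t =>
        if t = 0 then
          (vword (dseq r) m).drop (qseq (dseq r) (m + 1) - qseq (dseq r) m + 1 - p)
        else vword (dseq r) (m + t))
      (applyInf ξ c) := by
  have hpos : ∀ i, 0 < dseq r (i + 1) := fun i => by unfold dseq; split_ifs <;> omega
  have hd₁₂ : dseq r 1 ≤ dseq r 2 := hr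
  have hd : ∀ n, 2 ≤ n → dseq r n = dseq r 2 := fun n hn => by
    unfold dseq; split_ifs <;> omega
  have hshift : applyInf ξ c = fun i => c (k + i) := funext <|
    applyInf_eq_of_isRightConj hξ (mpow_ne_nil sigmaGen_two_ne_nil m)
      (prefInf_applyM_mpow_sigmaGen_two hpos hd₁₂ hd hc m)
  have hlen := length_vword_add (hpos m)
  have hq := List.length_pos_iff.mpr (sseq_ne_nil (d := dseq r) (m + 1))
  rw [length_sseq] at hq
  have hℓ : qseq (dseq r) (m + 1) - qseq (dseq r) m + 1 - p ≤ (vword (dseq r) m).length := by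
    omega
  have hkℓ : k = (sseq (dseq r) (m + 1)).dropLast.length +
      (qseq (dseq r) (m + 1) - qseq (dseq r) m + 1 - p) := by
    rw [List.length_dropLast, length_sseq]; omega
  rintro (_ | n)
  · exact fun i hi => absurd hi (Nat.not_lt_zero i)
  rw [hshift, flatten_map_drop_vword hpos hℓ, ← hkℓ]
  exact ((hc _).of_prefix (List.dropLast_prefix _)).drop k
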